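/- arXiv:alg-geom/9407010 — 5 statements merged into one kernel-verified Lean document; each statement's English description precedes it below -/
import Mathlib

section
/- Let k be a field of characteristic zero and let M^• be a cosimplicial Σ•-module over k. Then the differential A* = Σ_{j=0}^{n} (−1)^j A_j : M^{n−1} → M^n preserves the sign decomposition: A*(sM^{n−1}) ⊆ sM^{n} and A*(rM^{n−1}) ⊆ rM^{n}. In particular, A*(sM^{n-1}) is contained in a Σ_{n+1}-submodule of M^{n} on which Alt acts as the identity. -/
/-! Since `Σ_{n+1}` is generated by the adjacent transpositions, `Alt w = w` holds exactly when
every `(m, m+1)` acts on `w` by `-1`. For alternating `v`, the compatibilities make `(m, m+1)`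
negate each term `A_j v` of `A* v` with `j ≠ m, m+1` and exchange the two remaining terms, which
carry opposite signs. For `v ∈ ker Alt`, the map `Alt ∘ A_0` transforms by the sign under
`Σ_{n+1}` (acting on `M^{n+1}` through the transpositions fixing `0`), so
`Alt (A_0 v) = Alt (A_0 (Alt v)) = 0`; and `A_{j+1} = (j, j+1) ∘ A_j` gives
`Alt ∘ A_{j+1} = -Alt ∘ A_j`. -/

/-- The alternating operator `Alt = (1/N!) Σ_{σ ∈ Σ_N} sgn(σ) σ` associated to a linear
action `ρ` of the symmetric group `Σ_N` on a `k`-vector space. -/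
noncomputable def altOp (k : Type*) [Field k] {M : Type*} [AddCommGroup M] [Module k M]
    {N : ℕ} (ρ : Equiv.Perm (Fin N) →* Module.End k M) : Module.End k M :=
  (Nat.factorial N : k)⁻¹ •
    ∑ σ : Equiv.Perm (Fin N), (((Equiv.Perm.sign σ : ℤ) : k)) • ρ σ

/-- The differential `A* = Σ_{j} (−1)^j A_j : M^n → M^{n+1}` of a cosimplicial module. -/
noncomputable def AStar {k : Type*} [Field k] {M : ℕ → Type*}
    [∀ n, AddCommGroup (M n)] [∀ n, Module k (M n)]
    (A : ∀ n, ℕ → (M n →ₗ[k] M (n + 1))) (n : ℕ) : M n →ₗ[k] M (n + 1) :=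
  ∑ j ∈ Finset.range (n + 2), ((-1 : k) ^ j) • A n j

open Equiv Equiv.Perm Finset

section Alternation

variable {k : Type*} [Field k] {M : Type*} [AddCommGroup M] [Module k M]
  {N : ℕ} (ρ : Perm (Fin N) →* Module.End k M)

lemma altOp_apply (v : M) :
    altOp k ρ v = (N.factorial : k)⁻¹ • ∑ σ : Perm (Fin N), ((sign σ : ℤ) : k) • ρ σ v := by
  simp [altOp]

lemma sign_cast_mul_self (σ : Perm (Fin N)) : ((sign σ : ℤ) : k) * ((sign σ : ℤ) : k) = 1 := by
  rcases Int.units_eq_one_or (sign σ) with h | h <;> simp [h]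

lemma map_altOp (σ : Perm (Fin N)) (v : M) :
    ρ σ (altOp k ρ v) = ((sign σ : ℤ) : k) • altOp k ρ v := by
  have hsum : ∑ π : Perm (Fin N), ((sign π : ℤ) : k) • ρ σ (ρ π v)
      = ((sign σ : ℤ) : k) • ∑ π : Perm (Fin N), ((sign π : ℤ) : k) • ρ π v := by
    rw [smul_sum]
    refine Fintype.sum_equiv (Equiv.mulLeft σ) _ _ fun π => ?_
    simp only [Equiv.coe_mulLeft, map_mul, Module.End.mul_apply, smul_smul,
      Units.val_mul, Int.cast_mul, ← mul_assoc, sign_cast_mul_self, one_mul]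
  rw [altOp_apply, map_smul, map_sum, smul_comm]
  simp only [map_smul, hsum]

lemma altOp_map (σ : Perm (Fin N)) (v : M) :
    altOp k ρ (ρ σ v) = ((sign σ : ℤ) : k) • altOp k ρ v := by
  have hsum : ∑ π : Perm (Fin N), ((sign π : ℤ) : k) • ρ π (ρ σ v)
      = ((sign σ : ℤ) : k) • ∑ π : Perm (Fin N), ((sign π : ℤ) : k) • ρ π v := by
    rw [smul_sum]
    refine Fintype.sum_equiv (Equiv.mulRight σ) _ _ fun π => ?_
    simp only [Equiv.coe_mulRight, map_mul, Module.End.mul_apply, smul_smul,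
      Units.val_mul, Int.cast_mul, mul_comm ((sign σ : ℤ) : k), mul_assoc, sign_cast_mul_self,
      mul_one]
  rw [altOp_apply, altOp_apply, hsum, smul_comm]

lemma map_eq_sign_smul_of_altOp_eq_self {v : M} (hv : altOp k ρ v = v) (σ : Perm (Fin N)) :
    ρ σ v = ((sign σ : ℤ) : k) • v := by
  simpa only [hv] using map_altOp ρ σ v

lemma map_swap_of_altOp_eq_self {v : M} (hv : altOp k ρ v = v) {a b : Fin N} (hab : a ≠ b) :
    ρ (swap a b) v = -v := by
  simp [map_eq_sign_smul_of_altOp_eq_self ρ hv, sign_swap hab]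

lemma altOp_map_swap {a b : Fin N} (hab : a ≠ b) (v : M) :
    altOp k ρ (ρ (swap a b) v) = -altOp k ρ v := by
  simp [altOp_map, sign_swap hab]

lemma altOp_map_of_altOp_eq_self {v : M} (hv : altOp k ρ v = v) (σ : Perm (Fin N)) :
    altOp k ρ (ρ σ v) = ρ σ v := by
  rw [altOp_map, hv, map_eq_sign_smul_of_altOp_eq_self ρ hv]

variable [CharZero k]

lemma inv_factorial_smul_sum_sign_smul {X : Type*} [AddCommGroup X] [Module k X]
    (g : Perm (Fin N) → X) (c : X) (hg : ∀ σ, g σ = ((sign σ : ℤ) : k) • c) :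
    (N.factorial : k)⁻¹ • ∑ σ : Perm (Fin N), ((sign σ : ℤ) : k) • g σ = c := by
  simp only [hg, smul_smul, sign_cast_mul_self, one_smul, sum_const, card_univ,
    Fintype.card_perm, Fintype.card_fin, ← Nat.cast_smul_eq_nsmul k]
  rw [inv_mul_cancel₀ (by exact_mod_cast N.factorial_ne_zero), one_smul]

lemma altOp_eq_self_of_map_eq_sign_smul {w : M} (hw : ∀ σ, ρ σ w = ((sign σ : ℤ) : k) • w) :
    altOp k ρ w = w :=
  (altOp_apply ρ w).trans (inv_factorial_smul_sum_sign_smul _ w hw)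

lemma map_altOp_of_comp_eq_sign_smul {X : Type*} [AddCommGroup X] [Module k X]
    (f : M →ₗ[k] X) (hf : ∀ σ, f ∘ₗ ρ σ = ((sign σ : ℤ) : k) • f) (v : M) :
    f (altOp k ρ v) = f v := by
  rw [altOp_apply, map_smul, map_sum]
  simp only [map_smul]
  exact inv_factorial_smul_sum_sign_smul _ _ fun σ => LinearMap.congr_fun (hf σ) v

end Alternation

section AdjacentTranspositions

variable {k : Type*} [CommRing k] {M : Type*} [AddCommGroup M] [Module k M]
  {n : ℕ} (ρ : Perm (Fin (n + 1)) →* Module.End k M)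

lemma sign_swap_castSucc_succ (i : Fin n) :
    ((sign (swap i.castSucc i.succ) : ℤ) : k) = -1 := by
  simp [sign_swap Fin.castSucc_lt_succ.ne]

lemma map_eq_sign_smul_of_map_swap_eq_neg {w : M}
    (hw : ∀ i : Fin n, ρ (swap i.castSucc i.succ) w = -w) (σ : Perm (Fin (n + 1))) :
    ρ σ w = ((sign σ : ℤ) : k) • w := by
  induction σ using Submonoid.induction_of_closure_eq_top_left (mclosure_swap_castSucc_succ n)
    with
  | one => simp
  | mul_left s hs σ ih =>
    obtain ⟨i, rfl⟩ := hs
    rw [map_mul, Module.End.mul_apply, ih, map_smul, hw, Perm.sign_mul, Units.val_mul,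
      Int.cast_mul, sign_swap_castSucc_succ, mul_smul, neg_one_smul, smul_neg]

lemma comp_eq_sign_smul_of_comp_swap_eq_neg {X : Type*} [AddCommGroup X] [Module k X]
    (f : M →ₗ[k] X) (hf : ∀ i : Fin n, f ∘ₗ ρ (swap i.castSucc i.succ) = -f)
    (σ : Perm (Fin (n + 1))) :
    f ∘ₗ ρ σ = ((sign σ : ℤ) : k) • f := by
  induction σ using Submonoid.induction_of_closure_eq_top_right (mclosure_swap_castSucc_succ n)
    with
  | one => ext; simp
  | mul_right σ s hs ih =>
    obtain ⟨i, rfl⟩ := hs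
    rw [map_mul, Module.End.mul_eq_comp, ← LinearMap.comp_assoc, ih, LinearMap.smul_comp, hf,
      Perm.sign_mul, Units.val_mul, Int.cast_mul, sign_swap_castSucc_succ, mul_neg_one, smul_neg,
      neg_smul]

end AdjacentTranspositions

section AdjacentTranspositionsAlternation

variable {k : Type*} [Field k] [CharZero k] {M : Type*} [AddCommGroup M] [Module k M]
  {n : ℕ} (ρ : Perm (Fin (n + 1)) →* Module.End k M)

lemma altOp_eq_self_of_map_swap_eq_neg {w : M}
    (hw : ∀ i : Fin n, ρ (swap i.castSucc i.succ) w = -w) : altOp k ρ w = w :=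
  altOp_eq_self_of_map_eq_sign_smul ρ (map_eq_sign_smul_of_map_swap_eq_neg ρ hw)

lemma map_altOp_of_comp_swap_eq_neg {X : Type*} [AddCommGroup X] [Module k X]
    (f : M →ₗ[k] X) (hf : ∀ i : Fin n, f ∘ₗ ρ (swap i.castSucc i.succ) = -f) (v : M) :
    f (altOp k ρ v) = f v :=
  map_altOp_of_comp_eq_sign_smul ρ f (comp_eq_sign_smul_of_comp_swap_eq_neg ρ f hf) v

end AdjacentTranspositionsAlternation

lemma map_sum_neg_one_pow_smul_of_swap {R V : Type*} [CommRing R] [AddCommGroup V] [Module R V]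
    (T : V →ₗ[R] V) (B : ℕ → V) {N m : ℕ} (hm : m + 1 < N)
    (h_left : T (B m) = B (m + 1)) (h_right : T (B (m + 1)) = B m)
    (h_other : ∀ j < N, j ≠ m → j ≠ m + 1 → T (B j) = -B j) :
    T (∑ j ∈ range N, (-1 : R) ^ j • B j) = -∑ j ∈ range N, (-1 : R) ^ j • B j := by
  rw [eq_neg_iff_add_eq_zero, map_sum, ← sum_add_distrib]
  rw [sum_eq_add_of_mem m (m + 1) (mem_range.2 (by omega)) (mem_range.2 hm) (by omega)]
  · simp only [map_smul, h_left, h_right, pow_succ]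
    module
  · intro j hj ⟨hjm, hjm1⟩
    rw [map_smul, h_other j (mem_range.1 hj) hjm hjm1, smul_neg, neg_add_cancel]

section Cosimplicial

variable {k : Type*} [Field k] {M : ℕ → Type*} [∀ n, AddCommGroup (M n)] [∀ n, Module k (M n)]

lemma AStar_apply (A : ∀ n, ℕ → (M n →ₗ[k] M (n + 1))) (n : ℕ) (v : M n) :
    AStar A n v = ∑ j ∈ range (n + 2), (-1 : k) ^ j • A n j v := by
  simp [AStar]

/-- The compatibilities of the cofaces `A_j` with the adjacent transpositions, written for
`(m, m + 1)`, i.e. the transposition `(i - 1, i)` with `i = m + 1`. -/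
structure CofaceSwapCompat (ρ : ∀ n, Perm (Fin (n + 1)) →* Module.End k (M n))
    (A : ∀ n, ℕ → (M n →ₗ[k] M (n + 1))) : Prop where
  swap_comp_of_lt (n m j : ℕ) (hm : m < n) (hj : j ≤ m) :
    ρ (n + 1) (swap ⟨m + 1, by omega⟩ ⟨m + 2, by omega⟩) ∘ₗ A n j
      = A n j ∘ₗ ρ n (swap ⟨m, by omega⟩ ⟨m + 1, by omega⟩)
  swap_comp_self (n m : ℕ) (hm : m ≤ n) :
    ρ (n + 1) (swap ⟨m, by omega⟩ ⟨m + 1, by omega⟩) ∘ₗ A n m = A n (m + 1)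
  swap_comp_succ (n m : ℕ) (hm : m ≤ n) :
    ρ (n + 1) (swap ⟨m, by omega⟩ ⟨m + 1, by omega⟩) ∘ₗ A n (m + 1) = A n m
  swap_comp_of_gt (n m j : ℕ) (hmj : m + 1 < j) (hj : j ≤ n + 1) :
    ρ (n + 1) (swap ⟨m, by omega⟩ ⟨m + 1, by omega⟩) ∘ₗ A n j
      = A n j ∘ₗ ρ n (swap ⟨m, by omega⟩ ⟨m + 1, by omega⟩)

namespace CofaceSwapCompat

variable {ρ : ∀ n, Perm (Fin (n + 1)) →* Module.End k (M n)} {A : ∀ n, ℕ → (M n →ₗ[k] M (n + 1))}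

theorem altOp_AStar_of_altOp_eq_self [CharZero k] (hA : CofaceSwapCompat ρ A) {n : ℕ}
    {v : M n} (hv : altOp k (ρ n) v = v) :
    altOp k (ρ (n + 1)) (AStar A n v) = AStar A n v := by
  refine altOp_eq_self_of_map_swap_eq_neg _ fun ⟨m, hm⟩ => ?_
  simp only [Fin.castSucc_mk, Fin.succ_mk, AStar_apply]
  refine map_sum_neg_one_pow_smul_of_swap _ _ (by omega : m + 1 < n + 2)
    (LinearMap.congr_fun (hA.swap_comp_self n m (by omega)) v)
    (LinearMap.congr_fun (hA.swap_comp_succ n m (by omega)) v) fun j hj hjm hjm1 => ?_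
  rcases Nat.lt_or_gt_of_ne hjm with hlt | hgt
  · obtain ⟨m', rfl⟩ : ∃ m', m = m' + 1 := ⟨m - 1, by omega⟩
    rw [← LinearMap.comp_apply, hA.swap_comp_of_lt n m' j (by omega) (by omega),
      LinearMap.comp_apply, map_swap_of_altOp_eq_self _ hv (by simp), map_neg]
  · rw [← LinearMap.comp_apply, hA.swap_comp_of_gt n m j (by omega) (by omega),
      LinearMap.comp_apply, map_swap_of_altOp_eq_self _ hv (by simp), map_neg]

theorem altOp_coface_zero_of_altOp_eq_zero [CharZero k] (hA : CofaceSwapCompat ρ A) {n : ℕ}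
    {v : M n} (hv : altOp k (ρ n) v = 0) : altOp k (ρ (n + 1)) (A n 0 v) = 0 := by
  have hswap : ∀ i : Fin n, (altOp k (ρ (n + 1)) ∘ₗ A n 0) ∘ₗ ρ n (swap i.castSucc i.succ)
      = -(altOp k (ρ (n + 1)) ∘ₗ A n 0) := by
    rintro ⟨m, hm⟩
    ext u
    simp only [Fin.castSucc_mk, Fin.succ_mk, LinearMap.comp_apply, LinearMap.neg_apply]
    rw [← LinearMap.comp_apply (A n 0), ← hA.swap_comp_of_lt n m 0 hm m.zero_le,
      LinearMap.comp_apply, altOp_map_swap _ (by simp)]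
  simpa [hv] using (map_altOp_of_comp_swap_eq_neg (ρ n) _ hswap v).symm

theorem altOp_AStar_of_altOp_eq_zero [CharZero k] (hA : CofaceSwapCompat ρ A) {n : ℕ}
    {v : M n} (hv : altOp k (ρ n) v = 0) : altOp k (ρ (n + 1)) (AStar A n v) = 0 := by
  have haltOp_coface : ∀ j ≤ n + 1, altOp k (ρ (n + 1)) (A n j v) = 0 := by
    intro j hj
    induction j with
    | zero => exact hA.altOp_coface_zero_of_altOp_eq_zero hv
    | succ j ih =>
      rw [← hA.swap_comp_self n j (by omega), LinearMap.comp_apply, altOp_map_swap _ (by simp),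
        ih (by omega), neg_zero]
  rw [AStar_apply, map_sum]
  exact sum_eq_zero fun j hj => by
    rw [map_smul, haltOp_coface j (Nat.lt_succ_iff.1 (mem_range.1 hj)), smul_zero]

end CofaceSwapCompat

end Cosimplicial

/-- For a cosimplicial `Σ_•`-module `M^•` over a field of characteristic zero, the
differential `A* = Σ (−1)^j A_j` preserves the sign decomposition
`M^n = sM^n ⊕ rM^n` (`sM^n` the fixed points of `Alt`, `rM^n = ker Alt`);
in particular `A*(sM^n)` lands in `sM^{n+1}`, which is a `Σ`-submodule on which `Alt` acts
as the identity. -/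
theorem AStar_preserves_sign_decomposition
    (k : Type*) [Field k] [CharZero k]
    (M : ℕ → Type*) [∀ n, AddCommGroup (M n)] [∀ n, Module k (M n)]
    (ρ : ∀ n, Equiv.Perm (Fin (n + 1)) →* Module.End k (M n))
    (A : ∀ n, ℕ → (M n →ₗ[k] M (n + 1)))
    -- compatibility with adjacent transpositions:  (i−1,i) ∘ A_j = A_j ∘ (i−2,i−1) for j < i−1
    (hswap_lt : ∀ (n i j : ℕ), ∀ _ : 1 ≤ i, ∀ hin : i ≤ n + 1, j + 1 < i →
      ((ρ (n + 1) (Equiv.swap (⟨i - 1, by omega⟩ : Fin (n + 2)) ⟨i, by omega⟩) :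
          M (n + 1) →ₗ[k] M (n + 1))) ∘ₗ A n j
        = A n j ∘ₗ ((ρ n (Equiv.swap (⟨i - 2, by omega⟩ : Fin (n + 1)) ⟨i - 1, by omega⟩) :
            M n →ₗ[k] M n)))
    -- (i−1,i) ∘ A_{i−1} = A_i
    (hswap_eq1 : ∀ (n i : ℕ), ∀ _ : 1 ≤ i, ∀ hin : i ≤ n + 1,
      ((ρ (n + 1) (Equiv.swap (⟨i - 1, by omega⟩ : Fin (n + 2)) ⟨i, by omega⟩) :
          M (n + 1) →ₗ[k] M (n + 1))) ∘ₗ A n (i - 1) = A n i)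
    -- (i−1,i) ∘ A_i = A_{i−1}
    (hswap_eq2 : ∀ (n i : ℕ), ∀ _ : 1 ≤ i, ∀ hin : i ≤ n + 1,
      ((ρ (n + 1) (Equiv.swap (⟨i - 1, by omega⟩ : Fin (n + 2)) ⟨i, by omega⟩) :
          M (n + 1) →ₗ[k] M (n + 1))) ∘ₗ A n i = A n (i - 1))
    -- (i−1,i) ∘ A_j = A_j ∘ (i−1,i) for j > i
    (hswap_gt : ∀ (n i j : ℕ), ∀ _ : 1 ≤ i, ∀ hij : i < j, ∀ hjn : j ≤ n + 1,
      ((ρ (n + 1) (Equiv.swap (⟨i - 1, by omega⟩ : Fin (n + 2)) ⟨i, by omega⟩) :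
          M (n + 1) →ₗ[k] M (n + 1))) ∘ₗ A n j
        = A n j ∘ₗ ((ρ n (Equiv.swap (⟨i - 1, by omega⟩ : Fin (n + 1)) ⟨i, by omega⟩) :
            M n →ₗ[k] M n))) :
    -- A* maps the alternating part into the alternating part
    (∀ (n : ℕ) (v : M n), altOp k (ρ n) v = v →
      altOp k (ρ (n + 1)) (AStar A n v) = AStar A n v) ∧
    -- A* maps the complementary part into the complementary part
    (∀ (n : ℕ) (v : M n), altOp k (ρ n) v = 0 →
      altOp k (ρ (n + 1)) (AStar A n v) = 0) ∧
    -- the alternating part is a Σ-submodule on which Alt acts as the identity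
    (∀ (n : ℕ) (σ : Equiv.Perm (Fin (n + 1))) (v : M n), altOp k (ρ n) v = v →
      altOp k (ρ n) ((ρ n σ) v) = (ρ n σ) v) := by
  have hA : CofaceSwapCompat ρ A :=
    { swap_comp_of_lt := fun n m j hm hj => hswap_lt n (m + 2) j (by omega) (by omega) (by omega)
      swap_comp_self := fun n m hm => hswap_eq1 n (m + 1) (by omega) (by omega)
      swap_comp_succ := fun n m hm => hswap_eq2 n (m + 1) (by omega) (by omega)
      swap_comp_of_gt := fun n m j hmj hj => hswap_gt n (m + 1) j (by omega) hmj hj }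
  exact ⟨fun n v hv => hA.altOp_AStar_of_altOp_eq_self hv,
    fun n v hv => hA.altOp_AStar_of_altOp_eq_zero hv,
    fun n σ v hv => altOp_map_of_altOp_eq_self (ρ n) hv σ⟩
end

section
/- Let A be a set and for each n ≥ 0 let X_n ⊆ A^{n+1} be a subset such that: (i) X_0 is nonempty; (ii) for n ≥ 1, deleting any coordinate of an element of X_n yields an element of X_{n−1}; and (iii) for every finite collection x_1, …, x_N of elements of X_n there exists a ∈ A such that, for each l, prepending a to x_l gives an element of X_{n+1}. Then for every abelian group V, the augmented chain complex with C_n equal to the finitely supported V-valued functions on X_n, boundary ∂(a_0,…,a_n) = Σ_{i=0}^{n} (−1)^i (a_0,…,â_i,…,a_n) on generators, and augmentation ε : C_0 → V given by summing values, is exact: ε is surjective, ker ε = im ∂, and ker(∂ : C_n → C_{n−1}) = im(∂ : C_{n+1} → C_n) for all n ≥ 1. -/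
/-- The boundary operator, on finitely supported `V`-valued functions on a compatible family
of subsets `X n ⊆ A^{n+1}`, given on generators by the alternating sum of coordinate
deletions. -/
noncomputable def bdrySet {A : Type*} {X : (n : ℕ) → Set (Fin (n + 1) → A)}
    (hdel : ∀ (n : ℕ) (x : Fin (n + 2) → A), x ∈ X (n + 1) →
      ∀ i : Fin (n + 2), (fun j => x (i.succAbove j)) ∈ X n)
    (V : Type*) [AddCommGroup V] {n : ℕ}
    (f : ↥(X (n + 1)) →₀ V) : ↥(X n) →₀ V :=
  f.sum fun x v => ∑ i : Fin (n + 2), ((-1 : ℤ) ^ (i : ℕ)) •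
    Finsupp.single (⟨fun j => x.1 (i.succAbove j), hdel n x.1 x.2 i⟩ : ↥(X n)) v

/-- The augmentation, sending a finitely supported function to the sum of its values. -/
noncomputable def augSet {A : Type*} {X : (n : ℕ) → Set (Fin (n + 1) → A)}
    (V : Type*) [AddCommGroup V] (f : ↥(X 0) →₀ V) : V :=
  f.sum fun _ v => v

section Aux

variable {A : Type*} {X : (n : ℕ) → Set (Fin (n + 1) → A)}

/-- The `i`-th face of `x`. -/
def delAux (hdel : ∀ (n : ℕ) (x : Fin (n + 2) → A), x ∈ X (n + 1) →
      ∀ i : Fin (n + 2), (fun j => x (i.succAbove j)) ∈ X n)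
    (n : ℕ) (x : ↥(X (n + 1))) (i : Fin (n + 2)) : ↥(X n) :=
  ⟨fun j => x.1 (i.succAbove j), hdel n x.1 x.2 i⟩

variable (hdel : ∀ (n : ℕ) (x : Fin (n + 2) → A), x ∈ X (n + 1) →
      ∀ i : Fin (n + 2), (fun j => x (i.succAbove j)) ∈ X n)
variable (V : Type*) [AddCommGroup V]

/-- The boundary operator as an `AddMonoidHom`. -/
noncomputable def DAux (n : ℕ) : (↥(X (n + 1)) →₀ V) →+ (↥(X n) →₀ V) :=
  Finsupp.liftAddHom fun x =>
    ∑ i : Fin (n + 2), ((-1 : ℤ) ^ (i : ℕ)) • Finsupp.singleAddHom (delAux hdel n x i)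

lemma DAux_single (n : ℕ) (x : ↥(X (n + 1))) (v : V) :
    DAux hdel V n (Finsupp.single x v)
      = ∑ i : Fin (n + 2), ((-1 : ℤ) ^ (i : ℕ)) • Finsupp.single (delAux hdel n x i) v := by
  classical
  rw [DAux, Finsupp.liftAddHom_apply, Finsupp.sum_single_index] <;>
    simp [AddMonoidHom.finset_sum_apply]

lemma bdrySet_eq (n : ℕ) (f : ↥(X (n + 1)) →₀ V) :
    bdrySet hdel V f = DAux hdel V n f := by
  rw [DAux, Finsupp.liftAddHom_apply, bdrySet]
  refine Finsupp.sum_congr fun x _ => ?_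
  simp [AddMonoidHom.finset_sum_apply, delAux]

/-- The augmentation as an `AddMonoidHom`. -/
noncomputable def augHom : (↥(X 0) →₀ V) →+ V :=
  Finsupp.liftAddHom fun _ => AddMonoidHom.id V

lemma augSet_eq (f : ↥(X 0) →₀ V) : augSet V f = augHom (X := X) V f := rfl

lemma augHom_single (x : ↥(X 0)) (v : V) : augHom (X := X) V (Finsupp.single x v) = v := by
  rw [augHom, Finsupp.liftAddHom_apply, Finsupp.sum_single_index] <;> rfl

end Aux

section Aux2

variable {A : Type*} {X : (n : ℕ) → Set (Fin (n + 1) → A)}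
variable (hdel : ∀ (n : ℕ) (x : Fin (n + 2) → A), x ∈ X (n + 1) →
      ∀ i : Fin (n + 2), (fun j => x (i.succAbove j)) ∈ X n)
variable (V : Type*) [AddCommGroup V]

open Classical in
/-- Prepending a fixed element `a`, as an `AddMonoidHom` (zero where undefined). -/
noncomputable def EAux (n : ℕ) (a : A) : (↥(X n) →₀ V) →+ (↥(X (n + 1)) →₀ V) :=
  Finsupp.liftAddHom fun x =>
    if h : (Fin.cons a x.1 : Fin (n + 2) → A) ∈ X (n + 1) then
      Finsupp.singleAddHom (⟨Fin.cons a x.1, h⟩ : ↥(X (n + 1))) else 0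

lemma EAux_single (n : ℕ) (a : A) (x : ↥(X n))
    (h : (Fin.cons a x.1 : Fin (n + 2) → A) ∈ X (n + 1)) (v : V) :
    EAux V n a (Finsupp.single x v)
      = Finsupp.single (⟨Fin.cons a x.1, h⟩ : ↥(X (n + 1))) v := by
  classical
  rw [EAux, Finsupp.liftAddHom_apply, Finsupp.sum_single_index]
  · rw [dif_pos h]; rfl
  · split_ifs <;> simp

lemma del_cons_zero (n : ℕ) (a : A) (x : ↥(X n))
    (h2 : (Fin.cons a x.1 : Fin (n + 2) → A) ∈ X (n + 1)) :
    delAux hdel n ⟨Fin.cons a x.1, h2⟩ 0 = x := by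
  apply Subtype.ext
  funext j
  show (Fin.cons a x.1 : Fin (n + 2) → A) ((0 : Fin (n + 2)).succAbove j) = x.1 j
  simp

lemma del_cons_succ (n : ℕ) (a : A) (x : ↥(X (n + 1)))
    (h2 : (Fin.cons a x.1 : Fin (n + 3) → A) ∈ X (n + 2)) (i : Fin (n + 2)) :
    (delAux hdel (n + 1) ⟨Fin.cons a x.1, h2⟩ i.succ).1
      = Fin.cons a (delAux hdel n x i).1 := by
  funext j
  show (Fin.cons a x.1 : Fin (n + 3) → A) (i.succ.succAbove j) = _
  induction j using Fin.cases with
  | zero => simp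
  | succ k => simp [delAux]

lemma del_cons_one (a : A) (x : ↥(X 0))
    (h2 : (Fin.cons a x.1 : Fin 2 → A) ∈ X 1) :
    (delAux hdel 0 ⟨Fin.cons a x.1, h2⟩ 1).1 = fun _ : Fin 1 => a := by
  funext j
  have hj : j = 0 := Fin.fin_one_eq_zero j
  subst hj
  show (Fin.cons a x.1 : Fin 2 → A) ((1 : Fin 2).succAbove 0) = a
  have : (1 : Fin 2).succAbove 0 = 0 := rfl
  rw [this, Fin.cons_zero]

end Aux2

section Aux3

variable {A : Type*} {X : (n : ℕ) → Set (Fin (n + 1) → A)}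
variable (hdel : ∀ (n : ℕ) (x : Fin (n + 2) → A), x ∈ X (n + 1) →
      ∀ i : Fin (n + 2), (fun j => x (i.succAbove j)) ∈ X n)
variable (V : Type*) [AddCommGroup V]

lemma keyStep (n : ℕ) (a : A) (x : ↥(X (n + 1)))
    (h2 : (Fin.cons a x.1 : Fin (n + 3) → A) ∈ X (n + 2)) (v : V) :
    DAux hdel V (n + 1) (Finsupp.single (⟨Fin.cons a x.1, h2⟩ : ↥(X (n + 2))) v)
      = Finsupp.single x v - EAux V n a (DAux hdel V n (Finsupp.single x v)) := by
  have hmem : ∀ i : Fin (n + 2),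
      (Fin.cons a (delAux hdel n x i).1 : Fin (n + 2) → A) ∈ X (n + 1) := fun i => by
    rw [← del_cons_succ hdel n a x h2 i]
    exact (delAux hdel (n + 1) ⟨Fin.cons a x.1, h2⟩ i.succ).2
  have hdelx : ∀ i : Fin (n + 2),
      delAux hdel (n + 1) ⟨Fin.cons a x.1, h2⟩ i.succ
        = (⟨Fin.cons a (delAux hdel n x i).1, hmem i⟩ : ↥(X (n + 1))) :=
    fun i => Subtype.ext (del_cons_succ hdel n a x h2 i)
  rw [DAux_single, DAux_single, Fin.sum_univ_succ, map_sum]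
  rw [del_cons_zero hdel (n + 1) a x h2]
  have hE : ∀ i : Fin (n + 2),
      EAux V n a (((-1 : ℤ) ^ (i : ℕ)) • Finsupp.single (delAux hdel n x i) v)
        = ((-1 : ℤ) ^ (i : ℕ)) •
          Finsupp.single (⟨Fin.cons a (delAux hdel n x i).1, hmem i⟩ : ↥(X (n + 1))) v := by
    intro i
    rw [map_zsmul, EAux_single V n a _ (hmem i)]
  simp only [hE, hdelx, Fin.val_succ, pow_succ, Fin.val_zero, pow_zero, one_smul, mul_neg_one,
    neg_smul, sub_eq_add_neg, Finset.sum_neg_distrib]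
end Aux3

section Aux4

variable {A : Type*} {X : (n : ℕ) → Set (Fin (n + 1) → A)}
variable (hdel : ∀ (n : ℕ) (x : Fin (n + 2) → A), x ∈ X (n + 1) →
      ∀ i : Fin (n + 2), (fun j => x (i.succAbove j)) ∈ X n)
variable (V : Type*) [AddCommGroup V]

lemma keyStep0 (a : A) (x : ↥(X 0))
    (h2 : (Fin.cons a x.1 : Fin 2 → A) ∈ X 1) (v : V) :
    DAux hdel V 0 (Finsupp.single (⟨Fin.cons a x.1, h2⟩ : ↥(X 1)) v)
      = Finsupp.single x v
        - Finsupp.single (delAux hdel 0 ⟨Fin.cons a x.1, h2⟩ 1) v := by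
  rw [DAux_single, Fin.sum_univ_two, del_cons_zero hdel 0 a x h2]
  norm_num [sub_eq_add_neg]

lemma val_succAbove {m : ℕ} (p : Fin (m + 1)) (q : Fin m) :
    ((p.succAbove q : Fin (m + 1)) : ℕ) = if (q : ℕ) < (p : ℕ) then (q : ℕ) else (q : ℕ) + 1 := by
  have hc : q.castSucc < p ↔ (q : ℕ) < (p : ℕ) := by rw [Fin.lt_def]; simp
  rw [Fin.succAbove]
  split_ifs with h h' h'
  · rfl
  · exact absurd (hc.mp h) h'
  · exact absurd (hc.mpr h') h
  · rfl

lemma dd_eq (n : ℕ) (x : ↥(X (n + 2))) (p : Fin (n + 3)) (q : Fin (n + 2))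
    (h : (p : ℕ) ≤ (q : ℕ)) :
    delAux hdel n (delAux hdel (n + 1) x p) q
      = delAux hdel n (delAux hdel (n + 1) x ⟨(q : ℕ) + 1, by omega⟩)
          ⟨(p : ℕ), by omega⟩ := by
  have hidx : ∀ k : Fin (n + 1), p.succAbove (q.succAbove k)
      = Fin.succAbove (⟨(q : ℕ) + 1, by omega⟩ : Fin (n + 3))
          (Fin.succAbove (⟨(p : ℕ), by omega⟩ : Fin (n + 2)) k) := by
    intro k
    apply Fin.ext
    simp only [val_succAbove]
    have hk := k.isLt
    have hq := q.isLt
    split_ifs <;> omega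
  apply Subtype.ext
  funext k
  exact congrArg x.1 (hidx k)

lemma DD_zero (n : ℕ) (f : ↥(X (n + 2)) →₀ V) :
    DAux hdel V n (DAux hdel V (n + 1) f) = 0 := by
  suffices h : (DAux hdel V n).comp (DAux hdel V (n + 1)) = 0 by
    have := congrArg (fun φ => φ f) h
    simpa using this
  apply Finsupp.addHom_ext
  intro x v
  show DAux hdel V n (DAux hdel V (n + 1) (Finsupp.single x v)) = 0
  rw [DAux_single, map_sum]
  have hterm : ∀ p : Fin (n + 3),
      DAux hdel V n (((-1 : ℤ) ^ (p : ℕ)) • Finsupp.single (delAux hdel (n + 1) x p) v)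
        = ∑ q : Fin (n + 2), ((-1 : ℤ) ^ ((p : ℕ) + (q : ℕ))) •
            Finsupp.single (delAux hdel n (delAux hdel (n + 1) x p) q) v := by
    intro p
    rw [map_zsmul, DAux_single, Finset.smul_sum]
    refine Finset.sum_congr rfl fun q _ => ?_
    rw [smul_smul, ← pow_add]
  simp only [hterm]
  rw [← Fintype.sum_prod_type']
  set T : Fin (n + 3) × Fin (n + 2) → (↥(X n) →₀ V) := fun pq =>
    ((-1 : ℤ) ^ ((pq.1 : ℕ) + (pq.2 : ℕ))) •
      Finsupp.single (delAux hdel n (delAux hdel (n + 1) x pq.1) pq.2) v with hT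
  show ∑ pq : Fin (n + 3) × Fin (n + 2), T pq = 0
  have hsym : ∀ (p : Fin (n + 3)) (q : Fin (n + 2)) (hpq : (p : ℕ) ≤ (q : ℕ)),
      T (p, q) + T (⟨(q : ℕ) + 1, by have := q.isLt; omega⟩,
        ⟨(p : ℕ), by have := q.isLt; omega⟩) = 0 := by
    intro p q hpq
    have hq := q.isLt
    simp only [hT]
    rw [dd_eq hdel n x p q hpq]
    rw [← add_smul]
    convert zero_smul ℤ _
    have h1 : ((⟨(q : ℕ) + 1, by have := q.isLt; omega⟩ : Fin (n + 3)) : ℕ)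
        + ((⟨(p : ℕ), by have := q.isLt; omega⟩ : Fin (n + 2)) : ℕ)
        = ((p : ℕ) + (q : ℕ)) + 1 := by
      show ((q : ℕ) + 1) + (p : ℕ) = ((p : ℕ) + (q : ℕ)) + 1
      omega
    rw [h1, pow_succ]
    ring
  let gf : Fin (n + 3) × Fin (n + 2) → Fin (n + 3) × Fin (n + 2) := fun pq =>
    if h : (pq.1 : ℕ) ≤ (pq.2 : ℕ)
    then (⟨(pq.2 : ℕ) + 1, by have := pq.2.isLt; omega⟩, ⟨(pq.1 : ℕ), by omega⟩)
    else (⟨(pq.2 : ℕ), by have := pq.2.isLt; omega⟩,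
          ⟨(pq.1 : ℕ) - 1, by have := pq.1.isLt; omega⟩)
  have hgf_pos : ∀ pq, ∀ h : (pq.1 : ℕ) ≤ (pq.2 : ℕ),
      gf pq = (⟨(pq.2 : ℕ) + 1, by have := pq.2.isLt; omega⟩, ⟨(pq.1 : ℕ), by omega⟩) :=
    fun pq h => dif_pos h
  have hgf_neg : ∀ pq, ∀ h : ¬ (pq.1 : ℕ) ≤ (pq.2 : ℕ),
      gf pq = (⟨(pq.2 : ℕ), by have := pq.2.isLt; omega⟩,
        ⟨(pq.1 : ℕ) - 1, by have := pq.1.isLt; omega⟩) :=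
    fun pq h => dif_neg h
  refine Finset.sum_ninvolution gf ?_ ?_ (fun _ => Finset.mem_univ _) ?_
  · intro pq
    by_cases h : (pq.1 : ℕ) ≤ (pq.2 : ℕ)
    · rw [hgf_pos pq h]
      exact hsym pq.1 pq.2 h
    · rw [hgf_neg pq h]
      push_neg at h
      have h' : (((⟨(pq.2 : ℕ), by have := pq.2.isLt; omega⟩ : Fin (n + 3))) : ℕ)
          ≤ (((⟨(pq.1 : ℕ) - 1, by have := pq.1.isLt; omega⟩ : Fin (n + 2))) : ℕ) := by
        show (pq.2 : ℕ) ≤ (pq.1 : ℕ) - 1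
        omega
      have h2 := hsym _ _ h'
      have he : ((⟨((((⟨(pq.1 : ℕ) - 1, by have := pq.1.isLt; omega⟩ : Fin (n + 2))) : ℕ)) + 1,
            by omega⟩ : Fin (n + 3)),
          (⟨(((⟨(pq.2 : ℕ), by have := pq.2.isLt; omega⟩ : Fin (n + 3))) : ℕ),
            by have := pq.2.isLt; omega⟩ : Fin (n + 2))) = pq := by
        simp only [Prod.ext_iff, Fin.ext_iff]
        refine ⟨?_, ?_⟩
        · show ((pq.1 : ℕ) - 1) + 1 = (pq.1 : ℕ)
          omega
        · trivial
      rw [he] at h2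
      rw [← h2]
      exact add_comm _ _
  · intro pq _ heq
    by_cases h : (pq.1 : ℕ) ≤ (pq.2 : ℕ)
    · rw [hgf_pos pq h] at heq
      have := congrArg (fun z : Fin (n + 3) × Fin (n + 2) => ((z.1 : ℕ))) heq
      simp only at this
      omega
    · rw [hgf_neg pq h] at heq
      have := congrArg (fun z : Fin (n + 3) × Fin (n + 2) => ((z.1 : ℕ))) heq
      simp only at this
      omega
  · intro pq
    by_cases h : (pq.1 : ℕ) ≤ (pq.2 : ℕ)
    · rw [hgf_pos pq h, hgf_neg _ (by show ¬ ((pq.2 : ℕ) + 1 ≤ (pq.1 : ℕ)); omega)]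
      simp only [Prod.ext_iff, Fin.ext_iff]
      exact ⟨trivial, by show (pq.2 : ℕ) + 1 - 1 = (pq.2 : ℕ); omega⟩
    · rw [hgf_neg pq h, hgf_pos _ (by show (pq.2 : ℕ) ≤ (pq.1 : ℕ) - 1; omega)]
      simp only [Prod.ext_iff, Fin.ext_iff]
      exact ⟨by show ((pq.1 : ℕ) - 1) + 1 = (pq.1 : ℕ); omega, trivial⟩

lemma aug_D (g : ↥(X 1) →₀ V) : augSet V (bdrySet hdel V g) = 0 := by
  rw [augSet_eq, bdrySet_eq]
  suffices h : (augHom (X := X) V).comp (DAux hdel V 0) = 0 by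
    have := congrArg (fun φ => φ g) h
    simpa using this
  apply Finsupp.addHom_ext
  intro x v
  show augHom (X := X) V (DAux hdel V 0 (Finsupp.single x v)) = 0
  rw [DAux_single, map_sum, Fin.sum_univ_two]
  rw [map_zsmul, map_zsmul, augHom_single, augHom_single]
  norm_num

end Aux4

/-- Combinatorial exactness: if `X 0` is nonempty, the family `X` is closed under coordinate
deletion, and every finite collection of elements of `X n` can simultaneously be extended by
prepending a common element of `A`, then the augmented chain complex of finitely supported
`V`-valued functions on the `X n` is exact. -/
theorem abstract_resolution_exact
    {A : Type*} (X : (n : ℕ) → Set (Fin (n + 1) → A))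
    (h0 : (X 0).Nonempty)
    (hdel : ∀ (n : ℕ) (x : Fin (n + 2) → A), x ∈ X (n + 1) →
      ∀ i : Fin (n + 2), (fun j => x (i.succAbove j)) ∈ X n)
    (hext : ∀ (n N : ℕ) (x : Fin N → ↥(X n)),
      ∃ a : A, ∀ l, (Fin.cons a (x l).1 : Fin (n + 2) → A) ∈ X (n + 1))
    (V : Type*) [AddCommGroup V] :
    Function.Surjective (augSet (X := X) V) ∧
    (∀ f : ↥(X 0) →₀ V,
      augSet V f = 0 ↔ ∃ g : ↥(X 1) →₀ V, bdrySet hdel V g = f) ∧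
    (∀ (n : ℕ) (f : ↥(X (n + 1)) →₀ V),
      bdrySet hdel V f = 0 ↔ ∃ g : ↥(X (n + 2)) →₀ V, bdrySet hdel V g = f) := by
  classical
  obtain ⟨x0, hx0⟩ := h0
  refine ⟨?_, ?_, ?_⟩
  · intro v
    refine ⟨Finsupp.single ⟨x0, hx0⟩ v, ?_⟩
    rw [augSet_eq, augHom_single]
  · intro f
    constructor
    · intro hf
      by_cases hfz : f = 0
      · exact ⟨0, by rw [hfz, bdrySet_eq, map_zero]⟩
      · obtain ⟨y0, hy0⟩ := Finsupp.support_nonempty_iff.mpr hfz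
        obtain ⟨a, hal⟩ := hext 0 f.support.card
          fun l => ((f.support.equivFin.symm l : f.support) : ↥(X 0))
        have ha : ∀ y ∈ f.support, (Fin.cons a y.1 : Fin 2 → A) ∈ X 1 := by
          intro y hy
          obtain ⟨l, hl⟩ := f.support.equivFin.symm.surjective ⟨y, hy⟩
          have h := hal l
          rw [hl] at h
          exact h
        refine ⟨EAux V 0 a f, ?_⟩
        rw [bdrySet_eq]
        have hrep : f = ∑ y ∈ f.support, Finsupp.single y (f y) := (Finsupp.sum_single f).symm
        set pt : ↥(X 0) := delAux hdel 0 ⟨Fin.cons a y0.1, ha y0 hy0⟩ 1 with hptdef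
        have hpt : ∀ y (hy : y ∈ f.support),
            delAux hdel 0 ⟨Fin.cons a y.1, ha y hy⟩ 1 = pt := by
          intro y hy
          apply Subtype.ext
          rw [del_cons_one hdel a y (ha y hy), hptdef, del_cons_one hdel a y0 (ha y0 hy0)]
        calc DAux hdel V 0 (EAux V 0 a f)
            = ∑ y ∈ f.support, DAux hdel V 0 (EAux V 0 a (Finsupp.single y (f y))) := by
              conv_lhs => rw [hrep]
              rw [map_sum, map_sum]
          _ = ∑ y ∈ f.support, (Finsupp.single y (f y) - Finsupp.single pt (f y)) := by
              refine Finset.sum_congr rfl fun y hy => ?_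
              rw [EAux_single V 0 a y (ha y hy), keyStep0 hdel V a y (ha y hy), hpt y hy]
          _ = f := by
              rw [Finset.sum_sub_distrib, ← hrep]
              have h1 : ∑ y ∈ f.support, Finsupp.single pt (f y)
                  = Finsupp.single pt (∑ y ∈ f.support, f y) :=
                (map_sum (Finsupp.singleAddHom pt) (fun y => f y) f.support).symm
              rw [h1]
              have h2 : ∑ y ∈ f.support, f y = 0 := hf
              rw [h2, Finsupp.single_zero, sub_zero]
    · rintro ⟨g, rfl⟩
      exact aug_D hdel V g
  · intro n f
    constructor
    · intro hf
      obtain ⟨a, hal⟩ := hext (n + 1) f.support.card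
        fun l => ((f.support.equivFin.symm l : f.support) : ↥(X (n + 1)))
      have ha : ∀ y ∈ f.support, (Fin.cons a y.1 : Fin (n + 3) → A) ∈ X (n + 2) := by
        intro y hy
        obtain ⟨l, hl⟩ := f.support.equivFin.symm.surjective ⟨y, hy⟩
        have h := hal l
        rw [hl] at h
        exact h
      refine ⟨EAux V (n + 1) a f, ?_⟩
      rw [bdrySet_eq]
      have hrep : f = ∑ y ∈ f.support, Finsupp.single y (f y) := (Finsupp.sum_single f).symm
      calc DAux hdel V (n + 1) (EAux V (n + 1) a f)
          = ∑ y ∈ f.support,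
              DAux hdel V (n + 1) (EAux V (n + 1) a (Finsupp.single y (f y))) := by
            conv_lhs => rw [hrep]
            rw [map_sum, map_sum]
        _ = ∑ y ∈ f.support, (Finsupp.single y (f y)
              - EAux V n a (DAux hdel V n (Finsupp.single y (f y)))) := by
            refine Finset.sum_congr rfl fun y hy => ?_
            rw [EAux_single V (n + 1) a y (ha y hy), keyStep hdel V n a y (ha y hy)]
        _ = f := by
            rw [Finset.sum_sub_distrib,
              ← map_sum (EAux V n a) (fun y => DAux hdel V n (Finsupp.single y (f y))) f.support,
              ← map_sum (DAux hdel V n) (fun y => Finsupp.single y (f y)) f.support,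
              ← hrep, ← bdrySet_eq, hf, map_zero, sub_zero]
    · rintro ⟨g, rfl⟩
      rw [bdrySet_eq, bdrySet_eq]
      exact DD_zero hdel V n g
end

section
/- Let G be a group. For n ≥ 0 let C_n = ℚ[G^{n+1}] be the ℚ-vector space with basis G^{n+1}, with boundary ∂ : C_n → C_{n−1} given on basis elements by ∂(g_0,…,g_n) = Σ_{i=0}^{n} (−1)^i (g_0,…,ĝ_i,…,g_n), and let Σ_{n+1} act on C_n by permuting the coordinates of basis elements. Let Alt = (1/(n+1)!) Σ_{σ∈Σ_{n+1}} sgn(σ) σ and let sC_n be the image of Alt (with sC_0 = C_0). Then ∂(sC_n) ⊆ sC_{n−1}, and the augmented complex 0 ← ℚ ←ε sC_0 ←∂ sC_1 ←∂ sC_2 ←∂ ⋯, where ε sends a finite ℚ-linear combination of basis elements to the sum of its coefficients, is exact. -/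
/-- The boundary `∂ : ℚ[G^{ℓ+1}] → ℚ[G^ℓ]`, given on basis elements by the alternating sum
of coordinate deletions. -/
noncomputable def bdryQ {G : Type*} {ℓ : ℕ}
    (f : (Fin (ℓ + 1) → G) →₀ ℚ) : (Fin ℓ → G) →₀ ℚ :=
  f.sum fun x q => ∑ i : Fin (ℓ + 1), ((-1 : ℚ) ^ (i : ℕ)) •
    Finsupp.single (fun j => x (i.succAbove j)) q

/-- The alternating projector `Alt = (1/ℓ!) Σ_{σ ∈ Σ_ℓ} sgn(σ) σ` on `ℚ[G^ℓ]`, where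
`Σ_ℓ` acts by permuting the coordinates of basis elements. -/
noncomputable def altQ (G : Type*) (ℓ : ℕ) :
    ((Fin ℓ → G) →₀ ℚ) →ₗ[ℚ] ((Fin ℓ → G) →₀ ℚ) :=
  (Nat.factorial ℓ : ℚ)⁻¹ •
    ∑ σ : Equiv.Perm (Fin ℓ),
      (((Equiv.Perm.sign σ : ℤ) : ℚ)) • Finsupp.lmapDomain ℚ ℚ (fun x => x ∘ σ)

/-- The augmentation `ε : ℚ[G^1] → ℚ`, the sum of the coefficients. -/
noncomputable def augQ {G : Type*} (f : (Fin 1 → G) →₀ ℚ) : ℚ :=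
  f.sum fun _ q => q

/-!
Deleting coordinate `i` of an alternating chain is `(-1)^i` times deleting coordinate `0`, so on
alternating chains `∂ = (n + 1) • (delete coordinate 0)`, and `∂∂ = 0` there because swapping the
first two coordinates flips the sign. Parametrising a permutation `σ` of `Fin (n + 1)` by `σ 0 = j`
and a permutation `τ` of the remaining coordinates, with sign `(-1)^j sgn τ`, turns `Alt (∂ f)`
into `(n + 1) • (delete coordinate 0) (Alt f) = ∂ (Alt f)`. Prepending a fixed element `e : G` is
a contracting homotopy of the whole complex augmented by `ℚ[G⁰] = ℚ`, in which
`∂ : ℚ[G¹] → ℚ[G⁰]` is the augmentation; as `∂` commutes with `Alt`, applying `Alt` to the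
contraction of an alternating cycle bounds it.
-/

open Finsupp Equiv

section PermFinSucc

variable {m : ℕ}

/-- The permutation of `Fin (m + 1)` sending `0` to `j` and `k.succ` to `j.succAbove (τ k)`. -/
def Fin.insertPerm (j : Fin (m + 1)) (τ : Perm (Fin m)) : Perm (Fin (m + 1)) :=
  (Fin.cycleRange j).symm * Perm.decomposeFin.symm (0, τ)

lemma Fin.insertPerm_zero (j : Fin (m + 1)) (τ : Perm (Fin m)) : Fin.insertPerm j τ 0 = j := by
  simp [Fin.insertPerm]

lemma Fin.insertPerm_comp_succ (j : Fin (m + 1)) (τ : Perm (Fin m)) :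
    ⇑(Fin.insertPerm j τ) ∘ Fin.succ = j.succAbove ∘ τ := by
  ext k
  simp [Fin.insertPerm]

lemma Fin.sign_insertPerm (j : Fin (m + 1)) (τ : Perm (Fin m)) :
    Perm.sign (Fin.insertPerm j τ) = (-1) ^ (j : ℕ) * Perm.sign τ := by
  simp [Fin.insertPerm, Fin.sign_cycleRange]

lemma Fin.bijective_insertPerm :
    Function.Bijective fun p : Fin (m + 1) × Perm (Fin m) => Fin.insertPerm p.1 p.2 := by
  refine (Fintype.bijective_iff_injective_and_card _).2 ⟨?_, ?_⟩
  · rintro ⟨j, τ⟩ ⟨j', τ'⟩ h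
    obtain rfl : j = j' := by
      simpa only [Fin.insertPerm_zero] using congrArg (· 0) h
    have hτ : j.succAbove ∘ τ = j.succAbove ∘ τ' := by
      rw [← Fin.insertPerm_comp_succ, ← Fin.insertPerm_comp_succ]
      exact congrArg (fun σ : Perm (Fin (m + 1)) => ⇑σ ∘ Fin.succ) h
    simpa [Equiv.ext_iff, funext_iff] using hτ
  · simp [Fintype.card_perm, Nat.factorial_succ]

lemma Fin.sum_perm_sign_smul_comp_succ {M : Type*} [AddCommGroup M] [Module ℚ M]
    (h : (Fin m → Fin (m + 1)) → M) :
    ∑ σ : Perm (Fin (m + 1)), (Perm.sign σ : ℚ) • h (σ ∘ Fin.succ) =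
      ∑ j : Fin (m + 1), ∑ τ : Perm (Fin m),
        ((-1) ^ (j : ℕ) * Perm.sign τ : ℚ) • h (j.succAbove ∘ τ) := by
  rw [← Fintype.sum_prod_type']
  refine (Fintype.sum_bijective _ Fin.bijective_insertPerm _ _ fun p => ?_).symm
  simp [Fin.insertPerm_comp_succ, Fin.sign_insertPerm]

end PermFinSucc

namespace StandardResolution

variable {G : Type*}

noncomputable def precomp {a b : ℕ} (F : Fin a → Fin b) :
    ((Fin b → G) →₀ ℚ) →ₗ[ℚ] ((Fin a → G) →₀ ℚ) :=
  lmapDomain ℚ ℚ fun x => x ∘ F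

lemma precomp_single {a b : ℕ} (F : Fin a → Fin b) (x : Fin b → G) (q : ℚ) :
    precomp F (single x q) = single (x ∘ F) q :=
  mapDomain_single

lemma precomp_precomp {a b c : ℕ} (F : Fin a → Fin b) (F' : Fin b → Fin c)
    (v : (Fin c → G) →₀ ℚ) : precomp F (precomp F' v) = precomp (F' ∘ F) v :=
  mapDomain_comp.symm

lemma precomp_id {a : ℕ} (v : (Fin a → G) →₀ ℚ) : precomp id v = v :=
  mapDomain_id

noncomputable def bdry (m : ℕ) : ((Fin (m + 1) → G) →₀ ℚ) →ₗ[ℚ] ((Fin m → G) →₀ ℚ) :=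
  ∑ i : Fin (m + 1), (-1 : ℚ) ^ (i : ℕ) • precomp i.succAbove

variable {m : ℕ}

lemma bdry_apply (f : (Fin (m + 1) → G) →₀ ℚ) :
    bdry m f = ∑ i : Fin (m + 1), (-1 : ℚ) ^ (i : ℕ) • precomp i.succAbove f := by
  simp [bdry, LinearMap.sum_apply]

lemma bdry_single (x : Fin (m + 1) → G) (q : ℚ) :
    bdry m (single x q) = ∑ i : Fin (m + 1), (-1 : ℚ) ^ (i : ℕ) • single (x ∘ i.succAbove) q := by
  simp [bdry_apply, precomp_single]

lemma bdryQ_eq_bdry (f : (Fin (m + 1) → G) →₀ ℚ) : bdryQ f = bdry m f := by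
  induction f using Finsupp.induction_linear with
  | zero => simp [bdryQ]
  | add f g hf hg =>
    rw [map_add, ← hf, ← hg, bdryQ, bdryQ, bdryQ, sum_add_index'] <;> simp [Finset.sum_add_distrib]
  | single x q => rw [bdryQ, sum_single_index (by simp), bdry_single]; rfl

lemma bdry_zero (f : (Fin 1 → G) →₀ ℚ) : bdry 0 f = single default (augQ f) := by
  induction f using Finsupp.induction_linear with
  | zero => simp [augQ]
  | add f g hf hg =>
    rw [map_add, hf, hg, augQ, augQ, augQ, sum_add_index' (fun _ => rfl) fun _ _ _ => rfl,
      single_add]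
  | single x q => simp [bdry_single, augQ, Subsingleton.elim _ (default : Fin 0 → G)]

lemma altQ_apply (f : (Fin m → G) →₀ ℚ) :
    altQ G m f = (m.factorial : ℚ)⁻¹ • ∑ σ : Perm (Fin m), (Perm.sign σ : ℚ) • precomp σ f := by
  simp [altQ, precomp, LinearMap.sum_apply]

lemma sign_mul_self_rat (σ : Perm (Fin m)) : (Perm.sign σ : ℚ) * Perm.sign σ = 1 := by
  rw [← Int.cast_mul, ← Units.val_mul, Int.units_mul_self, Units.val_one, Int.cast_one]

def IsAlternating (v : (Fin m → G) →₀ ℚ) : Prop :=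
  ∀ σ : Perm (Fin m), precomp σ v = (Perm.sign σ : ℚ) • v

lemma isAlternating_altQ (f : (Fin m → G) →₀ ℚ) : IsAlternating (altQ G m f) := by
  intro τ
  have hsign (σ : Perm (Fin m)) : (Perm.sign σ : ℚ) = Perm.sign τ * Perm.sign (σ * τ) := by
    rw [Perm.sign_mul, Units.val_mul, Int.cast_mul, mul_left_comm, sign_mul_self_rat, mul_one]
  rw [altQ_apply, map_smul, map_sum, smul_comm]
  congr 1
  calc ∑ σ : Perm (Fin m), precomp τ ((Perm.sign σ : ℚ) • precomp σ f)
      = ∑ σ : Perm (Fin m),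
          (Perm.sign τ : ℚ) • ((Perm.sign (σ * τ) : ℚ) • precomp (σ * τ : Perm (Fin m)) f) :=
        Finset.sum_congr rfl fun σ _ => by rw [map_smul, precomp_precomp, hsign, mul_smul]; rfl
    _ = (Perm.sign τ : ℚ) • ∑ π : Perm (Fin m), (Perm.sign π : ℚ) • precomp π f := by
        rw [← Finset.smul_sum]
        exact congrArg _ (Equiv.sum_comp (Equiv.mulRight τ) fun π => (Perm.sign π : ℚ) • precomp π f)

lemma altQ_eq_self {v : (Fin m → G) →₀ ℚ} (hv : IsAlternating v) : altQ G m v = v := by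
  simp only [altQ_apply, hv _, smul_smul, sign_mul_self_rat, one_smul, Finset.sum_const,
    Finset.card_univ, Fintype.card_perm, Fintype.card_fin, ← Nat.cast_smul_eq_nsmul ℚ]
  rw [inv_mul_cancel₀ (by positivity), one_smul]

lemma altQ_one (f : (Fin 1 → G) →₀ ℚ) : altQ G 1 f = f :=
  altQ_eq_self fun σ => by
    rw [Subsingleton.elim σ 1, Perm.sign_one, Units.val_one, Int.cast_one, one_smul]
    exact precomp_id f

lemma precomp_succAbove_of_isAlternating {w : (Fin (m + 1) → G) →₀ ℚ} (hw : IsAlternating w)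
    (i : Fin (m + 1)) : precomp i.succAbove w = (-1 : ℚ) ^ (i : ℕ) • precomp Fin.succ w := by
  have hcomp : (i.succAbove : Fin m → Fin (m + 1)) = (Fin.cycleRange i).symm ∘ Fin.succ := by
    ext k
    simp
  rw [hcomp, ← precomp_precomp, hw, map_smul, Perm.sign_symm, Fin.sign_cycleRange]
  push_cast
  rfl

lemma bdry_of_isAlternating {w : (Fin (m + 1) → G) →₀ ℚ} (hw : IsAlternating w) :
    bdry m w = ((m : ℚ) + 1) • precomp Fin.succ w := by
  have hterm (i : Fin (m + 1)) :
      (-1 : ℚ) ^ (i : ℕ) • precomp i.succAbove w = precomp Fin.succ w := by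
    rw [precomp_succAbove_of_isAlternating hw, smul_smul, ← mul_pow, neg_one_mul, neg_neg,
      one_pow, one_smul]
  rw [bdry_apply, Finset.sum_congr rfl fun i _ => hterm i, Finset.sum_const, Finset.card_univ,
    Fintype.card_fin, ← Nat.cast_smul_eq_nsmul ℚ]
  push_cast
  rfl

lemma precomp_succ_succ_of_isAlternating {w : (Fin (m + 2) → G) →₀ ℚ} (hw : IsAlternating w) :
    precomp (Fin.succ : Fin m → Fin (m + 1)) (precomp Fin.succ w) = 0 := by
  have hswap : ⇑(swap (0 : Fin (m + 2)) 1) ∘ Fin.succ ∘ Fin.succ =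
      (Fin.succ ∘ Fin.succ : Fin m → Fin (m + 2)) := by
    ext k
    refine congrArg Fin.val (swap_apply_of_ne_of_ne (Fin.succ_ne_zero _) ?_)
    rw [← Fin.succ_zero_eq_one]
    exact (Fin.succ_injective _).ne (Fin.succ_ne_zero k)
  rw [precomp_precomp, ← self_eq_neg]
  conv_lhs => rw [← hswap, ← precomp_precomp, hw, Perm.sign_swap zero_ne_one, map_smul]
  simp

lemma bdry_altQ (f : (Fin (m + 1) → G) →₀ ℚ) :
    bdry m (altQ G (m + 1) f) = altQ G m (bdry m f) := by
  have hfact : ((m : ℚ) + 1) * ((m + 1).factorial : ℚ)⁻¹ = (m.factorial : ℚ)⁻¹ := by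
    rw [Nat.factorial_succ]
    push_cast
    field_simp
  rw [bdry_of_isAlternating (isAlternating_altQ f), altQ_apply, altQ_apply, map_smul, smul_smul,
    hfact]
  congr 1
  simp only [map_sum, map_smul, precomp_precomp, bdry_apply, Finset.smul_sum, smul_smul]
  rw [Fin.sum_perm_sign_smul_comp_succ fun F => precomp F f, Finset.sum_comm]
  simp only [mul_comm]

lemma bdry_bdry_of_isAlternating {w : (Fin (m + 2) → G) →₀ ℚ} (hw : IsAlternating w) :
    bdry m (bdry (m + 1) w) = 0 := by
  have hbw : IsAlternating (bdry (m + 1) w) := by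
    rw [← altQ_eq_self hw, bdry_altQ]
    exact isAlternating_altQ _
  rw [bdry_of_isAlternating hbw, bdry_of_isAlternating hw, map_smul,
    precomp_succ_succ_of_isAlternating hw, smul_zero, smul_zero]

section Cone

variable (e : G)

noncomputable def cone : ((Fin m → G) →₀ ℚ) →ₗ[ℚ] ((Fin (m + 1) → G) →₀ ℚ) :=
  lmapDomain ℚ ℚ fun x => Fin.cons e x

lemma cone_single (x : Fin m → G) (q : ℚ) : cone e (single x q) = single (Fin.cons e x) q :=
  mapDomain_single

lemma bdry_cone_add_cone_bdry (f : (Fin (m + 1) → G) →₀ ℚ) :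
    bdry (m + 1) (cone e f) + cone e (bdry m f) = f := by
  induction f using Finsupp.induction_linear with
  | zero => simp
  | add f g hf hg => rw [map_add, map_add, map_add, map_add, add_add_add_comm, hf, hg]
  | single x q =>
    have hzero : (Fin.cons e x : Fin (m + 2) → G) ∘ (0 : Fin (m + 2)).succAbove = x := by
      ext
      simp
    have hsucc (j : Fin (m + 1)) :
        (-1 : ℚ) ^ (j.succ : ℕ) • single ((Fin.cons e x : Fin (m + 2) → G) ∘ j.succ.succAbove) q =
          -cone e ((-1 : ℚ) ^ (j : ℕ) • single (x ∘ j.succAbove) q) := by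
      rw [Fin.cons_comp_succ_succAbove, map_smul, cone_single, Fin.val_succ, pow_succ, mul_neg_one,
        neg_smul]
      rfl
    rw [cone_single, bdry_single, Fin.sum_univ_succ, hzero, Finset.sum_congr rfl fun j _ => hsucc j,
      bdry_single, map_sum, Finset.sum_neg_distrib, Fin.val_zero, pow_zero, one_smul,
      neg_add_cancel_right]

lemma bdry_altQ_cone_of_bdry_eq_zero {v : (Fin (m + 1) → G) →₀ ℚ} (hv : IsAlternating v)
    (h : bdry m v = 0) : bdry (m + 1) (altQ G (m + 2) (cone e v)) = v := by
  have hcone := bdry_cone_add_cone_bdry e v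
  rw [h, map_zero, add_zero] at hcone
  rw [bdry_altQ, hcone, altQ_eq_self hv]

end Cone

lemma bdry_eq_zero_iff_exists_bdry_altQ_eq [Nonempty G] {v : (Fin (m + 1) → G) →₀ ℚ}
    (hv : IsAlternating v) :
    bdry m v = 0 ↔ ∃ g : (Fin (m + 2) → G) →₀ ℚ, bdry (m + 1) (altQ G (m + 2) g) = v :=
  ⟨fun h => ⟨cone (Classical.arbitrary G) v, bdry_altQ_cone_of_bdry_eq_zero _ hv h⟩,
    fun ⟨g, hg⟩ => hg ▸ bdry_bdry_of_isAlternating (isAlternating_altQ g)⟩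

end StandardResolution

open StandardResolution

/-- For a group `G`, the boundary of the standard resolution preserves the alternating part
`sC_• = im(Alt)`, and the augmented complex `0 ← ℚ ← sC_0 ← sC_1 ← sC_2 ← ⋯` of
alternating parts is exact. -/
theorem alternating_part_of_standard_resolution_exact (G : Type*) [Group G] :
    -- ∂ preserves the alternating part
    (∀ (ℓ : ℕ) (f : (Fin (ℓ + 2) → G) →₀ ℚ),
      ∃ g : (Fin (ℓ + 1) → G) →₀ ℚ, bdryQ (altQ G (ℓ + 2) f) = altQ G (ℓ + 1) g) ∧
    -- the augmentation is surjective on sC_0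
    (∀ q : ℚ, ∃ f : (Fin 1 → G) →₀ ℚ, augQ (altQ G 1 f) = q) ∧
    -- exactness at sC_0
    (∀ f : (Fin 1 → G) →₀ ℚ,
      augQ (altQ G 1 f) = 0 ↔
        ∃ g : (Fin 2 → G) →₀ ℚ, bdryQ (altQ G 2 g) = altQ G 1 f) ∧
    -- exactness at sC_n for n ≥ 1
    (∀ (ℓ : ℕ) (f : (Fin (ℓ + 2) → G) →₀ ℚ),
      bdryQ (altQ G (ℓ + 2) f) = 0 ↔
        ∃ g : (Fin (ℓ + 3) → G) →₀ ℚ, bdryQ (altQ G (ℓ + 3) g) = altQ G (ℓ + 2) f) := by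
  have hexact (m : ℕ) (v : (Fin (m + 1) → G) →₀ ℚ) (hv : IsAlternating v) :
      bdry m v = 0 ↔ ∃ g : (Fin (m + 2) → G) →₀ ℚ, bdryQ (altQ G (m + 2) g) = v := by
    simpa only [bdryQ_eq_bdry] using bdry_eq_zero_iff_exists_bdry_altQ_eq hv
  refine ⟨fun ℓ f => ⟨bdryQ f, by rw [bdryQ_eq_bdry, bdryQ_eq_bdry, bdry_altQ]⟩,
    fun q => ⟨single 1 q, by rw [altQ_one, augQ, sum_single_index rfl]⟩, fun f => ?_,
    fun ℓ f => ?_⟩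
  · rw [altQ_one, ← single_eq_zero (a := (default : Fin 0 → G)), ← bdry_zero]
    exact hexact 0 f (altQ_one f ▸ isAlternating_altQ f)
  · rw [bdryQ_eq_bdry]
    exact hexact (ℓ + 1) _ (isAlternating_altQ f)
end

section
/- Let G be a group and V a vector space over a field of characteristic zero, regarded as a trivial G-module. Let C^n(G,V)^G be the invariant homogeneous cochain complex, on which Σ_{n+1} acts by permuting the arguments of a cochain. Then the coboundary δ preserves the sign decomposition C^n(G,V)^G = sC^n(G,V)^G ⊕ rC^n(G,V)^G, the cohomology of the subcomplex rC^•(G,V)^G vanishes in every degree, and consequently the inclusion sC^•(G,V)^G ↪ C^•(G,V)^G induces an isomorphism on cohomology; that is, the group cohomology H^•(G,V) consists entirely of its alternating part. -/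
/-- `G`-invariance of a homogeneous cochain (the module `V` being a trivial module). -/
def InvFull (G : Type*) [Group G] {V : Type*} [AddCommGroup V] {ℓ : ℕ}
    (f : (Fin ℓ → G) → V) : Prop :=
  ∀ (g : G) (x : Fin ℓ → G), f (fun i => g * x i) = f x

/-- The homogeneous coboundary `δ` on cochains. -/
noncomputable def dFull {G V : Type*} [AddCommGroup V] {ℓ : ℕ}
    (f : (Fin ℓ → G) → V) : (Fin (ℓ + 1) → G) → V :=
  fun x => ∑ i : Fin (ℓ + 1), ((-1 : ℤ) ^ (i : ℕ)) • f (fun j => x (i.succAbove j))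

/-- The alternating projector `Alt = (1/ℓ!) Σ_{σ ∈ Σ_ℓ} sgn(σ) σ` on homogeneous cochains,
where `Σ_ℓ` acts by permuting the arguments. -/
noncomputable def altCochain (F : Type*) [Field F] {G V : Type*} [AddCommGroup V]
    [Module F V] {ℓ : ℕ} (f : (Fin ℓ → G) → V) : (Fin ℓ → G) → V :=
  fun x => (Nat.factorial ℓ : F)⁻¹ •
    ∑ σ : Equiv.Perm (Fin ℓ), (((Equiv.Perm.sign σ : ℤ) : F)) • f (x ∘ σ)

/-! The chains on a set `X`, formal combinations of tuples `Fin k → X`, carry the simplicial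
boundary `∂` and the antisymmetrizer `Alt`, and the two commute. By the method of acyclic models
there is a chain homotopy `∂h + h∂ = 1 - Alt` that is natural in `X`: `h` is determined by its
value `κₖ` on the model simplex `id : Fin k → Fin k`, and `κₖ₊₁` is obtained by coning off, from a
vertex, the model cycle `ι - Alt ι - κₖ(∂ι)`. Pairing with cochains turns `h` into a homotopy `K`
on cochains, which preserves `G`-invariance by naturality. Hence an invariant cocycle `f` with
`Alt f = 0` is the coboundary of the invariant cochain `K f - Alt (K f)`, and the comparison of
`C^•(G,V)^G` with its alternating part follows formally. -/

open Finsupp Equiv Equiv.Perm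

namespace Equiv.Perm

variable {k : ℕ}

noncomputable def decomposeFinAt (i : Fin (k + 1)) :
    Fin (k + 1) × Perm (Fin k) ≃ Perm (Fin (k + 1)) :=
  Equiv.ofBijective
    (fun pτ => pτ.1.cycleRange.symm * decomposeFin.symm (0, pτ.2) * i.cycleRange) <| by
    rw [Fintype.bijective_iff_injective_and_card]
    refine ⟨fun ⟨p, τ⟩ ⟨q, ρ⟩ h => ?_, by simp [Fintype.card_perm, Nat.factorial_succ]⟩
    obtain rfl : p = q := by simpa using congr($h i)
    simpa using h

lemma decomposeFinAt_apply_succAbove (i p : Fin (k + 1)) (τ : Perm (Fin k)) (m : Fin k) :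
    decomposeFinAt i (p, τ) (i.succAbove m) = p.succAbove (τ m) := by
  simp [decomposeFinAt]

lemma sign_decomposeFinAt (i p : Fin (k + 1)) (τ : Perm (Fin k)) :
    sign (decomposeFinAt i (p, τ)) = (-1) ^ (p : ℕ) * sign τ * (-1) ^ (i : ℕ) := by
  simp [decomposeFinAt]

lemma sum_sign_mul_smul_comp_succAbove {M : Type*} [AddCommGroup M] (i : Fin (k + 1))
    (h : (Fin k → Fin (k + 1)) → M) :
    ∑ σ : Perm (Fin (k + 1)), (sign σ * (-1) ^ (i : ℕ) : ℤ) • h (σ ∘ i.succAbove) =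
      ∑ p : Fin (k + 1), ∑ τ : Perm (Fin k),
        ((-1) ^ (p : ℕ) * sign τ : ℤ) • h (p.succAbove ∘ τ) := by
  rw [← (decomposeFinAt i).sum_comp, Fintype.sum_prod_type]
  refine Finset.sum_congr rfl fun p _ => Finset.sum_congr rfl fun τ _ => ?_
  rw [show decomposeFinAt i (p, τ) ∘ i.succAbove = p.succAbove ∘ τ from
    funext (decomposeFinAt_apply_succAbove i p τ), sign_decomposeFinAt]
  push_cast
  rw [mul_assoc, ← pow_add, Even.neg_one_pow ⟨_, rfl⟩, mul_one]

end Equiv.Perm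

namespace HomogeneousChain

/-- Tuples of length `k`, i.e. `(k-1)`-simplices, as for the cochains `(Fin k → G) → V`. -/
abbrev Chain (R : Type*) [Semiring R] (k : ℕ) (X : Type*) : Type _ := (Fin k → X) →₀ R

section Ring

variable {R : Type*} [CommRing R] {X Y Z : Type*} {k m : ℕ}

noncomputable def boundary : Chain R (k + 1) X →ₗ[R] Chain R k X :=
  linearCombination R fun α => ∑ i : Fin (k + 1), ((-1 : ℤ) ^ (i : ℕ)) • single (α ∘ i.succAbove) 1

noncomputable def map (φ : X → Y) : Chain R k X →ₗ[R] Chain R k Y :=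
  lmapDomain R R (φ ∘ ·)

noncomputable def cone (v : X) : Chain R k X →ₗ[R] Chain R (k + 1) X :=
  lmapDomain R R fun α => (Fin.cons v α : Fin (k + 1) → X)

noncomputable def model (k : ℕ) : Chain R k (Fin k) := single id 1

noncomputable def ofModel (κ : Chain R m (Fin k)) : Chain R k X →ₗ[R] Chain R m X :=
  linearCombination R fun α => map α κ

@[simp] lemma boundary_single (α : Fin (k + 1) → X) (c : R) :
    boundary (single α c) =
      c • ∑ i : Fin (k + 1), ((-1 : ℤ) ^ (i : ℕ)) • single (α ∘ i.succAbove) (1 : R) :=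
  linearCombination_single _ _ _

@[simp] lemma map_single (φ : X → Y) (α : Fin k → X) (c : R) :
    map φ (single α c) = single (φ ∘ α) c :=
  mapDomain_single

@[simp] lemma cone_single (v : X) (α : Fin k → X) (c : R) :
    cone v (single α c) = single (Fin.cons v α) c :=
  mapDomain_single

@[simp] lemma ofModel_single (κ : Chain R m (Fin k)) (α : Fin k → X) (c : R) :
    ofModel κ (single α c) = c • map α κ :=
  linearCombination_single _ _ _

lemma map_model (α : Fin k → X) : map α (model k) = single α (1 : R) := by
  simp [model]

lemma map_map (φ : X → Y) (ψ : Y → Z) (c : Chain R k X) :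
    map ψ (map φ c) = map (ψ ∘ φ) c := by
  induction c using Finsupp.induction_linear with
  | zero => simp
  | add c d hc hd => simp only [map_add, hc, hd]
  | single α c => simp [Function.comp_assoc]

lemma boundary_map (φ : X → Y) (c : Chain R (k + 1) X) :
    boundary (map φ c) = map φ (boundary c) := by
  induction c using Finsupp.induction_linear with
  | zero => simp
  | add c d hc hd => simp only [map_add, hc, hd]
  | single α c => simp [Function.comp_assoc]

lemma map_ofModel (κ : Chain R m (Fin k)) (φ : X → Y) (c : Chain R k X) :
    map φ (ofModel κ c) = ofModel κ (map φ c) := by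
  induction c using Finsupp.induction_linear with
  | zero => simp
  | add c d hc hd => simp only [map_add, hc, hd]
  | single α c => simp [map_map]

lemma boundary_cone (v : X) (c : Chain R (k + 1) X) :
    boundary (cone v c) = c - cone v (boundary c) := by
  induction c using Finsupp.induction_linear with
  | zero => simp
  | add c d hc hd => simp only [map_add, hc, hd]; abel
  | single α c =>
    have : ∀ j : Fin (k + 1), Fin.cons v α ∘ j.succ.succAbove = Fin.cons v (α ∘ j.succAbove) := by
      intro j; ext m; cases m using Fin.cases <;> simp [Fin.succ_succAbove_succ]
    simp [Fin.sum_univ_succ (n := k + 1), this, pow_succ, sub_eq_add_neg]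

/-- Every tuple of length `k + 3` is a cone on its tail, so `∂∂ = 0` propagates upwards through
`boundary_cone` from length `2`. -/
lemma boundary_boundary (c : Chain R (k + 2) X) : boundary (boundary c) = 0 := by
  induction k with
  | zero =>
    induction c using Finsupp.induction_linear with
    | zero => simp
    | add c d hc hd => simp only [map_add, hc, hd, add_zero]
    | single α c => simp [Fin.sum_univ_two, Unique.eq_default (α := Fin 0 → X)]
  | succ k ih =>
    induction c using Finsupp.induction_linear with
    | zero => simp
    | add c d hc hd => simp only [map_add, hc, hd, add_zero]
    | single α c =>
      rw [← Fin.cons_self_tail α, ← cone_single, boundary_cone, map_sub, boundary_cone, ih]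
      simp

end Ring

section Field

variable {F : Type*} [Field F] {X Y : Type*} {k : ℕ}

noncomputable def alt : Chain F k X →ₗ[F] Chain F k X :=
  linearCombination F fun α =>
    (k.factorial : F)⁻¹ • ∑ σ : Perm (Fin k), (sign σ : ℤ) • single (α ∘ σ) 1

@[simp] lemma alt_single (α : Fin k → X) (c : F) :
    alt (single α c) =
      c • (k.factorial : F)⁻¹ • ∑ σ : Perm (Fin k), (sign σ : ℤ) • single (α ∘ σ) (1 : F) :=
  linearCombination_single _ _ _

lemma alt_map (φ : X → Y) (c : Chain F k X) : alt (map φ c) = map φ (alt c) := by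
  induction c using Finsupp.induction_linear with
  | zero => simp
  | add c d hc hd => simp only [map_add, hc, hd]
  | single α c => simp [Function.comp_assoc]

lemma alt_single_comp_perm (α : Fin k → X) (σ : Perm (Fin k)) :
    alt (single (α ∘ σ) (1 : F)) = (sign σ : ℤ) • alt (single α (1 : F)) := by
  rw [alt_single, alt_single, one_smul, one_smul, smul_comm ((sign σ : ℤ)) (k.factorial : F)⁻¹]
  congr 1
  rw [Finset.smul_sum]
  symm
  refine Fintype.sum_equiv (Equiv.mulLeft σ⁻¹) _ _ fun ρ => ?_
  have : (α ∘ σ) ∘ ⇑(σ⁻¹ * ρ) = α ∘ ρ := by ext; simp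
  rw [Equiv.coe_mulLeft, this, Perm.sign_mul, sign_inv, Units.val_mul, mul_smul]

lemma alt_alt [CharZero F] (c : Chain F k X) : alt (alt c) = alt c := by
  induction c using Finsupp.induction_linear with
  | zero => simp
  | add c d hc hd => simp only [map_add, hc, hd]
  | single α c =>
    rw [← smul_single_one, map_smul, map_smul]
    congr 1
    conv_lhs => rw [alt_single, one_smul, map_smul, map_sum]
    simp only [map_zsmul, alt_single_comp_perm, smul_smul, ← Units.val_mul, Int.units_mul_self,
      Units.val_one, one_smul]
    rw [Finset.sum_const, Finset.card_univ, Fintype.card_perm, Fintype.card_fin,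
      ← Nat.cast_smul_eq_nsmul F, smul_smul, inv_mul_cancel₀ (by simp [Nat.factorial_ne_zero]),
      one_smul]

lemma alt_of_one (c : Chain F 1 X) : alt c = c := by
  induction c using Finsupp.induction_linear with
  | zero => simp
  | add c d hc hd => simp only [map_add, hc, hd]
  | single α c => simp

lemma boundary_alt [CharZero F] (c : Chain F (k + 1) X) : boundary (alt c) = alt (boundary c) := by
  induction c using Finsupp.induction_linear with
  | zero => simp
  | add c d hc hd => simp only [map_add, hc, hd]
  | single α c =>
    rw [← smul_single_one, map_smul, map_smul, map_smul, map_smul]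
    congr 1
    -- both sides are multiples of the sum `T` over the faces of `α` with their induced orderings
    set T := ∑ p : Fin (k + 1), ∑ τ : Perm (Fin k),
      ((-1) ^ (p : ℕ) * sign τ : ℤ) • single (α ∘ p.succAbove ∘ τ) (1 : F)
    have hA : ∑ σ : Perm (Fin (k + 1)), (sign σ : ℤ) • boundary (single (α ∘ σ) (1 : F)) =
        (k + 1) • T := by
      simp only [boundary_single, one_smul, Finset.smul_sum, smul_smul]
      rw [Finset.sum_comm]
      simp only [Function.comp_assoc]
      rw [Finset.sum_congr rfl fun i _ =>
        sum_sign_mul_smul_comp_succAbove i fun β => single (α ∘ β) (1 : F)]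
      simp only [Finset.sum_const, Finset.card_univ, Fintype.card_fin, T]
    have hB : ∑ p : Fin (k + 1), ((-1 : ℤ) ^ (p : ℕ)) • alt (single (α ∘ p.succAbove) (1 : F)) =
        (k.factorial : F)⁻¹ • T := by
      simp only [alt_single, one_smul, smul_comm ((-1 : ℤ) ^ _) (k.factorial : F)⁻¹,
        ← Finset.smul_sum]
      simp only [Finset.smul_sum, smul_smul, Function.comp_assoc, T]
    rw [alt_single, one_smul, map_smul, map_sum]
    simp only [map_zsmul]
    rw [hA, boundary_single, one_smul, map_sum]
    simp only [map_zsmul]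
    rw [hB, ← Nat.cast_smul_eq_nsmul F, smul_smul]
    congr 1
    rw [Nat.factorial_succ]
    push_cast
    field_simp

lemma boundary_ofModel_add_ofModel_boundary_of_model {κ : Chain F (k + 2) (Fin (k + 1))}
    {κ' : Chain F (k + 1) (Fin k)}
    (h : boundary κ + ofModel κ' (boundary (model (k + 1))) = model (k + 1) - alt (model (k + 1)))
    (c : Chain F (k + 1) X) : boundary (ofModel κ c) + ofModel κ' (boundary c) = c - alt c := by
  suffices boundary ∘ₗ ofModel κ + ofModel κ' ∘ₗ boundary =
      (LinearMap.id - alt : Chain F (k + 1) X →ₗ[F] _) from LinearMap.congr_fun this c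
  ext α : 2
  simp only [LinearMap.add_apply, LinearMap.sub_apply, LinearMap.comp_apply, lsingle_apply,
    LinearMap.id_apply]
  rw [ofModel_single, one_smul, ← map_model α, boundary_map, boundary_map, ← map_ofModel,
    ← map_add, h, map_sub, alt_map]

noncomputable def universalHomotopy : (k : ℕ) → Chain F (k + 1) (Fin k)
  | 0 => 0
  | k + 1 => cone 0 (model (k + 1) - alt (model (k + 1)) -
      ofModel (universalHomotopy k) (boundary (model (k + 1))))

lemma boundary_universalHomotopy_add [CharZero F] (k : ℕ) :
    boundary (universalHomotopy (F := F) (k + 1)) +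
        ofModel (universalHomotopy k) (boundary (model (k + 1))) =
      model (k + 1) - alt (model (k + 1)) := by
  induction k with
  | zero => simp [universalHomotopy, alt_of_one, ofModel, ← Pi.zero_def]
  | succ k ih =>
    have hcycle := boundary_ofModel_add_ofModel_boundary_of_model ih (boundary (model (k + 2)))
    rw [boundary_boundary, map_zero, add_zero] at hcycle
    have hz : boundary (model (k + 2) - alt (model (k + 2)) -
        ofModel (universalHomotopy (k + 1)) (boundary (model (k + 2)))) =
          (0 : Chain F (k + 1) _) := by
      rw [map_sub, map_sub, boundary_alt, hcycle, sub_self]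
    rw [universalHomotopy, boundary_cone, hz, map_zero, sub_zero, sub_add_cancel]

theorem boundary_ofModel_add_ofModel_boundary [CharZero F] (c : Chain F (k + 1) X) :
    boundary (ofModel (universalHomotopy (k + 1)) c) + ofModel (universalHomotopy k) (boundary c) =
      c - alt c :=
  boundary_ofModel_add_ofModel_boundary_of_model (boundary_universalHomotopy_add k) c

end Field

section Pairing

variable {F : Type*} [Field F] {G V : Type*} [AddCommGroup V] [Module F V] {k : ℕ}

lemma linearCombination_boundary (f : (Fin k → G) → V) (c : Chain F (k + 1) G) :
    linearCombination F f (boundary c) = linearCombination F (dFull f) c := by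
  induction c using Finsupp.induction_linear with
  | zero => simp
  | add c d hc hd => simp only [map_add, hc, hd]
  | single x c =>
    simp only [boundary_single, map_smul, map_sum, map_zsmul, linearCombination_single, one_smul]
    rfl

lemma linearCombination_alt (f : (Fin k → G) → V) (c : Chain F k G) :
    linearCombination F f (alt c) = linearCombination F (altCochain F f) c := by
  induction c using Finsupp.induction_linear with
  | zero => simp
  | add c d hc hd => simp only [map_add, hc, hd]
  | single x c => simp [altCochain, Int.cast_smul_eq_zsmul]

lemma linearCombination_ofModel {m : ℕ} (κ : Chain F m (Fin k)) (f : (Fin m → G) → V)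
    (c : Chain F k G) :
    linearCombination F f (ofModel κ c) =
      linearCombination F (fun x => linearCombination F f (map x κ)) c := by
  induction c using Finsupp.induction_linear with
  | zero => simp
  | add c d hc hd => simp only [map_add, hc, hd]
  | single x c => simp

lemma InvFull.linearCombination_map_mul_left [Group G] {f : (Fin k → G) → V} (hf : InvFull G f)
    (g : G) (c : Chain F k G) :
    linearCombination F f (map (g * ·) c) = linearCombination F f c := by
  rw [map, lmapDomain_apply, linearCombination_mapDomain]
  exact congrArg (fun f => linearCombination F f c) (funext (hf g))

end Pairing

end HomogeneousChain

open HomogeneousChain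

section Cochain

variable {F : Type*} [Field F] {G V : Type*} [AddCommGroup V] [Module F V] {k : ℕ}

lemma dFull_zero : dFull (0 : (Fin k → G) → V) = 0 := by
  funext x
  simp [dFull]

lemma dFull_sub (f f' : (Fin k → G) → V) : dFull (f - f') = dFull f - dFull f' := by
  funext x
  simp [dFull, smul_sub, Finset.sum_sub_distrib]

lemma altCochain_zero : altCochain F (0 : (Fin k → G) → V) = 0 := by
  funext x
  simp [altCochain]

lemma altCochain_sub (f f' : (Fin k → G) → V) :
    altCochain F (f - f') = altCochain F f - altCochain F f' := by
  funext x
  simp [altCochain, smul_sub, Finset.sum_sub_distrib]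

lemma altCochain_eq_linearCombination (f : (Fin k → G) → V) (x : Fin k → G) :
    altCochain F f x = linearCombination F f (alt (single x 1)) := by
  rw [linearCombination_alt, linearCombination_single, one_smul]

lemma dFull_altCochain [CharZero F] (f : (Fin (k + 1) → G) → V) :
    altCochain F (dFull f) = dFull (altCochain F f) := by
  funext x
  have h := congrArg (linearCombination F f) (boundary_alt (single x (1 : F)))
  rwa [linearCombination_boundary, linearCombination_alt, linearCombination_alt,
    linearCombination_boundary, linearCombination_single, linearCombination_single, one_smul,
    one_smul] at h

lemma altCochain_altCochain [CharZero F] (f : (Fin k → G) → V) :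
    altCochain F (altCochain F f) = altCochain F f := by
  funext x
  have h := congrArg (linearCombination F f) (alt_alt (single x (1 : F)))
  rwa [linearCombination_alt, linearCombination_alt, linearCombination_alt,
    linearCombination_single, linearCombination_single, one_smul, one_smul] at h

lemma altCochain_of_one (f : (Fin 1 → G) → V) : altCochain F f = f := by
  funext x
  have h := congrArg (linearCombination F f) (alt_of_one (single x (1 : F)))
  rwa [linearCombination_alt, linearCombination_single, linearCombination_single, one_smul,
    one_smul] at h

variable (F) in
noncomputable def cochainHomotopy (k : ℕ) (f : (Fin (k + 1) → G) → V) : (Fin k → G) → V :=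
  fun x => linearCombination F f (map x (universalHomotopy k))

lemma cochainHomotopy_zero : cochainHomotopy F k (0 : (Fin (k + 1) → G) → V) = 0 := by
  funext x
  simp [cochainHomotopy]

lemma dFull_cochainHomotopy_add [CharZero F] (f : (Fin (k + 1) → G) → V) :
    dFull (cochainHomotopy F k f) + cochainHomotopy F (k + 1) (dFull f) = f - altCochain F f := by
  funext x
  have h := congrArg (linearCombination F f)
    (boundary_ofModel_add_ofModel_boundary (single x (1 : F)))
  rwa [map_add, map_sub, linearCombination_boundary, linearCombination_ofModel,
    linearCombination_ofModel, linearCombination_boundary, linearCombination_alt,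
    linearCombination_single, linearCombination_single, linearCombination_single,
    linearCombination_single, one_smul, one_smul, one_smul, one_smul, add_comm] at h

end Cochain

namespace InvFull

variable {F : Type*} [Field F] {G V : Type*} [Group G] [AddCommGroup V] [Module F V] {k : ℕ}
  {f : (Fin k → G) → V}

lemma sub {f' : (Fin k → G) → V} (hf : InvFull G f) (hf' : InvFull G f') : InvFull G (f - f') :=
  fun g x => by simp [hf g x, hf' g x]

lemma altCochain (hf : InvFull G f) : InvFull G (altCochain F f) := fun g x => by
  have hx : single (fun i => g * x i) (1 : F) = map (g * ·) (single x 1) := (map_single _ _ _).symm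
  rw [altCochain_eq_linearCombination, altCochain_eq_linearCombination, hx, alt_map,
    hf.linearCombination_map_mul_left]

lemma cochainHomotopy {f : (Fin (k + 1) → G) → V} (hf : InvFull G f) :
    InvFull G (cochainHomotopy F k f) := fun g x => by
  have hx : map (R := F) (fun i => g * x i) (universalHomotopy k) =
      map (g * ·) (map x (universalHomotopy k)) := (map_map _ _ _).symm
  rw [_root_.cochainHomotopy, _root_.cochainHomotopy, hx, hf.linearCombination_map_mul_left]

end InvFull

theorem exists_eq_dFull_of_altCochain_eq_zero {F : Type*} [Field F] [CharZero F] {G V : Type*}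
    [Group G] [AddCommGroup V] [Module F V] {k : ℕ} {f : (Fin (k + 2) → G) → V}
    (hf : InvFull G f) (halt : altCochain F f = 0) (hd : dFull f = 0) :
    ∃ w : (Fin (k + 1) → G) → V, InvFull G w ∧ altCochain F w = 0 ∧ f = dFull w := by
  have hK : dFull (cochainHomotopy F (k + 1) f) = f := by
    simpa [hd, halt, cochainHomotopy_zero] using dFull_cochainHomotopy_add (F := F) f
  refine ⟨cochainHomotopy F (k + 1) f - altCochain F (cochainHomotopy F (k + 1) f),
    hf.cochainHomotopy.sub hf.cochainHomotopy.altCochain, ?_, ?_⟩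
  · rw [altCochain_sub, altCochain_altCochain, sub_self]
  · rw [dFull_sub, ← dFull_altCochain, hK, halt, sub_zero]

/-- For a group `G` and a vector space `V` over a field of characteristic zero, the
coboundary on invariant homogeneous cochains preserves the sign decomposition, the
cohomology of the complementary subcomplex `rC^•(G,V)^G` vanishes in every degree, and the
inclusion of the alternating subcomplex `sC^•(G,V)^G` induces an isomorphism on cohomology:
group cohomology consists entirely of its alternating part. -/
theorem group_cohomology_is_alternating
    (F : Type*) [Field F] [CharZero F] (G : Type*) [Group G]
    (V : Type*) [AddCommGroup V] [Module F V] :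
    -- δ preserves the sign decomposition (on the invariant subcomplex)
    (∀ (ℓ : ℕ) (f : (Fin (ℓ + 1) → G) → V), InvFull G f →
      (altCochain F f = f → altCochain F (dFull f) = dFull f) ∧
      (altCochain F f = 0 → altCochain F (dFull f) = 0)) ∧
    -- H^0 of the r-part vanishes
    (∀ f : (Fin 1 → G) → V, InvFull G f → altCochain F f = 0 → dFull f = 0 → f = 0) ∧
    -- H^{n+1} of the r-part vanishes
    (∀ (n : ℕ) (f : (Fin (n + 2) → G) → V), InvFull G f → altCochain F f = 0 →
      dFull f = 0 →
      ∃ w : (Fin (n + 1) → G) → V, InvFull G w ∧ altCochain F w = 0 ∧ f = dFull w) ∧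
    -- the inclusion of the s-part is bijective on H^0
    (∀ f : (Fin 1 → G) → V, InvFull G f → dFull f = 0 → altCochain F f = f) ∧
    -- the inclusion of the s-part is surjective on H^{n+1}
    (∀ (n : ℕ) (f : (Fin (n + 2) → G) → V), InvFull G f → dFull f = 0 →
      ∃ u : (Fin (n + 2) → G) → V, InvFull G u ∧ altCochain F u = u ∧ dFull u = 0 ∧
        ∃ w : (Fin (n + 1) → G) → V, InvFull G w ∧ f = u + dFull w) ∧
    -- the inclusion of the s-part is injective on H^{n+1}
    (∀ (n : ℕ) (u : (Fin (n + 2) → G) → V), InvFull G u → altCochain F u = u →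
      dFull u = 0 → (∃ w : (Fin (n + 1) → G) → V, InvFull G w ∧ u = dFull w) →
      ∃ ws : (Fin (n + 1) → G) → V,
        InvFull G ws ∧ altCochain F ws = ws ∧ u = dFull ws) := by
  refine ⟨fun ℓ f _ => ⟨fun h => ?_, fun h => ?_⟩, fun f _ h _ => ?_,
    fun n f hf halt hd => exists_eq_dFull_of_altCochain_eq_zero hf halt hd,
    fun f _ _ => altCochain_of_one f, fun n f hf hd => ?_, fun n u _ hu _ ⟨w, hw, huw⟩ => ?_⟩
  · rw [dFull_altCochain, h]
  · rw [dFull_altCochain, h, dFull_zero]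
  · rw [← altCochain_of_one (F := F) f, h]
  · have hdalt : dFull (altCochain F f) = 0 := by rw [← dFull_altCochain, hd, altCochain_zero]
    obtain ⟨w, hw, -, hfw⟩ := exists_eq_dFull_of_altCochain_eq_zero (F := F)
      (hf.sub hf.altCochain) (by rw [altCochain_sub, altCochain_altCochain, sub_self])
      (by rw [dFull_sub, hd, hdalt, sub_zero])
    exact ⟨altCochain F f, hf.altCochain, altCochain_altCochain f, hdalt, w, hw,
      (sub_eq_iff_eq_add').mp hfw⟩
  · exact ⟨altCochain F w, hw.altCochain, altCochain_altCochain w,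
      by rw [← dFull_altCochain, ← huw, hu]⟩
end

section
/- Let M and N be locally compact Hausdorff topological spaces equipped with their Borel σ-algebras, let π : M → N be a continuous proper map (preimages of compact sets are compact), let μ be a Borel measure on M, let φ : M → [0,∞) be continuous, and let ν be the pushforward under π of the measure with density φ with respect to μ (so that ∫_N g dν = ∫_M (g∘π)·φ dμ for nonnegative Borel g). Let p > 0 be a real number and let f : N → ℝ be Borel measurable. If the function x ↦ |f(π(x))|^p is locally integrable on M with respect to μ, then the function y ↦ |f(y)|^p is locally integrable on N with respect to ν. -/
open MeasureTheory

/-- Let `π : M → N` be a continuous proper map of locally compact Hausdorff spaces with their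
Borel σ-algebras, `μ` a Borel measure on `M`, `φ : M → [0,∞)` continuous, and let `ν` be the
pushforward under `π` of the measure with density `φ` with respect to `μ`.  If `p > 0` and
`f : N → ℝ` is Borel measurable with `x ↦ |f (π x)|^p` locally integrable on `M` w.r.t. `μ`,
then `y ↦ |f y|^p` is locally integrable on `N` w.r.t. `ν`. -/
theorem locallyIntegrable_of_proper_pushforward
    {M N : Type*}
    [TopologicalSpace M] [LocallyCompactSpace M] [T2Space M]
    [MeasurableSpace M] [BorelSpace M]
    [TopologicalSpace N] [LocallyCompactSpace N] [T2Space N]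
    [MeasurableSpace N] [BorelSpace N]
    (π : M → N) (hπ : Continuous π)
    (hproper : ∀ K : Set N, IsCompact K → IsCompact (π ⁻¹' K))
    (μ : Measure M) (φ : M → ℝ) (hφ : Continuous φ) (hφ0 : ∀ x, 0 ≤ φ x)
    (p : ℝ) (hp : 0 < p) (f : N → ℝ) (hf : Measurable f)
    (h : LocallyIntegrable (fun x : M => |f (π x)| ^ p) μ) :
    LocallyIntegrable (fun y : N => |f y| ^ p)
      (Measure.map π (μ.withDensity fun x => ENNReal.ofReal (φ x))) := by
  have hg : Measurable fun y : N => |f y| ^ p :=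
    (Real.continuous_rpow_const hp.le).measurable.comp hf.abs
  rw [locallyIntegrable_iff]
  intro K hK
  have hπm : Measurable π := hπ.measurable
  rw [IntegrableOn, Measure.restrict_map hπm hK.measurableSet,
    integrable_map_measure hg.aestronglyMeasurable hπm.aemeasurable,
    restrict_withDensity (hπm hK.measurableSet),
    integrable_withDensity_iff (hφ.measurable.ennreal_ofReal)
      (Filter.Eventually.of_forall fun x => ENNReal.ofReal_lt_top)]
  have h1 : IntegrableOn (fun x : M => |f (π x)| ^ p) (π ⁻¹' K) μ :=
    h.integrableOn_isCompact (hproper K hK)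
  have h2 := h1.mul_continuousOn hφ.continuousOn (hproper K hK)
  refine h2.congr_fun (fun x _ => ?_) (hπm hK.measurableSet)
  simp [ENNReal.toReal_ofReal (hφ0 x)]
end
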